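/- Define the quadratic Δ(u) = (uρσ − κ)² − σ²(u² − u) with parameters κ, θ, σ > 0, ρ ∈ (−1,1) satisfying ρσ − κ < 0. Then the two real roots of Δ are u_± = (1/2 − ρκ/σ ± sqrt((κ/σ − ρ)κ/σ + 1/4))/(1 − ρ²), and they satisfy u_− < 0 < 1 < u_+. -/
import Mathlib


open Set

/-- The roots of the Heston quadratic `Δ(u) = (uρσ − κ)² − σ²(u² − u)` are
`u_± = (1/2 − ρκ/σ ± sqrt((κ/σ − ρ)κ/σ + 1/4))/(1 − ρ²)` and satisfy `u_− < 0 < 1 < u_+`. -/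
theorem stmt4 (κ θ σ ρ : ℝ) (hκ : 0 < κ) (hθ : 0 < θ) (hσ : 0 < σ)
    (hρ : ρ ∈ Set.Ioo (-1 : ℝ) 1) (hρκ : ρ * σ - κ < 0)
    (Δ : ℝ → ℝ) (hΔ : ∀ u, Δ u = (u * ρ * σ - κ) ^ 2 - σ ^ 2 * (u ^ 2 - u))
    (um up : ℝ)
    (hum : um = (1 / 2 - ρ * κ / σ - Real.sqrt ((κ / σ - ρ) * (κ / σ) + 1 / 4)) / (1 - ρ ^ 2))
    (hup : up = (1 / 2 - ρ * κ / σ + Real.sqrt ((κ / σ - ρ) * (κ / σ) + 1 / 4)) / (1 - ρ ^ 2)) :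
    Δ um = 0 ∧ Δ up = 0 ∧ um < 0 ∧ (0 : ℝ) < 1 ∧ (1 : ℝ) < up := by
  obtain ⟨hρ1, hρ2⟩ := hρ
  have hσ0 : σ ≠ 0 := ne_of_gt hσ
  have h1ρ : (0:ℝ) < 1 - ρ ^ 2 := by nlinarith
  have h1ρ' : (1:ℝ) - ρ ^ 2 ≠ 0 := ne_of_gt h1ρ
  have hD : (0:ℝ) < (κ / σ - ρ) * (κ / σ) + 1 / 4 := by
    have h1 : ρ < κ / σ := by rw [lt_div_iff₀ hσ]; nlinarith
    nlinarith [sq_nonneg (κ / σ - ρ / 2)]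
  set s : ℝ := Real.sqrt ((κ / σ - ρ) * (κ / σ) + 1 / 4) with hsdef
  have hs2 : s ^ 2 = (κ / σ - ρ) * (κ / σ) + 1 / 4 := Real.sq_sqrt hD.le
  have hs0 : 0 < s := Real.sqrt_pos.mpr hD
  have hs2' : s ^ 2 * σ ^ 2 = (κ - ρ * σ) * κ + σ ^ 2 / 4 := by
    rw [hs2]; field_simp
  have hW : ((1 - ρ ^ 2) * σ) ^ 2 ≠ 0 := by positivity
  have hmum : um * ((1 - ρ ^ 2) * σ) = σ / 2 - ρ * κ - σ * s := by
    rw [hum]; field_simp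
  have hmup : up * ((1 - ρ ^ 2) * σ) = σ / 2 - ρ * κ + σ * s := by
    rw [hup]; field_simp
  refine ⟨?_, ?_, ?_, one_pos, ?_⟩
  · rw [hΔ]
    have H : ((um * ρ * σ - κ) ^ 2 - σ ^ 2 * (um ^ 2 - um)) * ((1 - ρ ^ 2) * σ) ^ 2 = 0 := by
      linear_combination
        (ρ * σ * (ρ * σ * (um * ((1 - ρ ^ 2) * σ) + (σ / 2 - ρ * κ - σ * s))
            - 2 * κ * ((1 - ρ ^ 2) * σ))
          - σ ^ 2 * (um * ((1 - ρ ^ 2) * σ) + (σ / 2 - ρ * κ - σ * s))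
          + σ ^ 2 * ((1 - ρ ^ 2) * σ)) * hmum
        + ((ρ ^ 2 - 1) * σ ^ 2) * hs2'
    exact (mul_eq_zero.mp H).resolve_right hW
  · rw [hΔ]
    have H : ((up * ρ * σ - κ) ^ 2 - σ ^ 2 * (up ^ 2 - up)) * ((1 - ρ ^ 2) * σ) ^ 2 = 0 := by
      linear_combination
        (ρ * σ * (ρ * σ * (up * ((1 - ρ ^ 2) * σ) + (σ / 2 - ρ * κ + σ * s))
            - 2 * κ * ((1 - ρ ^ 2) * σ))
          - σ ^ 2 * (up * ((1 - ρ ^ 2) * σ) + (σ / 2 - ρ * κ + σ * s))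
          + σ ^ 2 * ((1 - ρ ^ 2) * σ)) * hmup
        + ((ρ ^ 2 - 1) * σ ^ 2) * hs2'
    exact (mul_eq_zero.mp H).resolve_right hW
  · -- um < 0 : numerator σ/2 - ρκ - σs < 0 since (σs)² - (σ/2-ρκ)² = (1-ρ²)κ² > 0
    have hnum : σ / 2 - ρ * κ - σ * s < 0 := by
      nlinarith [hs2', hs0, mul_pos h1ρ (mul_pos hκ hκ), mul_pos hσ hs0]
    have := hmum
    nlinarith [mul_pos h1ρ hσ]
  · -- 1 < up : σs > σ/2 + ρκ - ρ²σ since (σs)² - (...)² = (1-ρ²)(κ-ρσ)² > 0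
    have ha2 : (σ * s) ^ 2 - (σ / 2 - ρ ^ 2 * σ + ρ * κ) ^ 2 = (1 - ρ ^ 2) * (κ - ρ * σ) ^ 2 := by
      linear_combination hs2'
    have hc : 0 < (1 - ρ ^ 2) * (κ - ρ * σ) ^ 2 :=
      mul_pos h1ρ (pow_pos (sub_pos.mpr (by linarith)) 2)
    have key : σ / 2 - ρ ^ 2 * σ + ρ * κ < σ * s := by
      have h2 : (σ / 2 - ρ ^ 2 * σ + ρ * κ) ^ 2 < (σ * s) ^ 2 := by linarith
      exact lt_of_pow_lt_pow_left₀ 2 (mul_pos hσ hs0).le h2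
    nlinarith [hmup, key, mul_pos h1ρ hσ]
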